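/- For constant velocity V > 0 with Courant number C = τV/h, if κ = (1 − C)/3 then the semi-implicit κ-scheme reproduces exactly every solution u(x,t) = u⁰(x − Vt) with u⁰ a cubic polynomial, i.e., the truncation error vanishes for cubic data (third-order accuracy). -/

import Mathlib

/-!
Since the scheme is linear and translation invariant, its residual on the exact translate
`u⁰(x - Vt)` of a cubic `u⁰ = a x³ + b x² + c x + d` does not depend on the grid point and only
the leading coefficient survives: it equals `a s (s + h) (3κh + s - h) / 2` with `s = τV = Ch`,
so the scheme is exact on quadratics for every `κ` and on cubics exactly when `κ = (1 - C)/3`.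
-/

namespace KappaScheme

/-- The κ-interpolated difference quotient `∂ₓᵏu` at `x`. -/
noncomputable def kappaDiff (κ h : ℝ) (u : ℝ → ℝ) (x : ℝ) : ℝ :=
  ((1 - κ) * (u x - u (x - h)) + (1 + κ) * (u (x + h) - u x)) / (2 * h)

/-- Residual of one time step of the semi-implicit κ-scheme, at the node `y`, on the exact
solution `u(x - Vt)`, where `s = τV` is the distance travelled in one step. -/
noncomputable def schemeResidual (κ h s : ℝ) (u : ℝ → ℝ) (y : ℝ) : ℝ :=
  u (y - s) + s * ((u (y - s) - u (y - s - h)) / h - 1 / 2 * kappaDiff κ h u (y - s - h))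
    - (u y - 1 / 2 * s * kappaDiff κ h u y)

theorem schemeResidual_of_cubic {a b c d κ h s : ℝ} (hh : h ≠ 0) {u : ℝ → ℝ}
    (hu : ∀ x, u x = a * x ^ 3 + b * x ^ 2 + c * x + d) (y : ℝ) :
    schemeResidual κ h s u y = a * s * (s + h) * (3 * κ * h + s - h) / 2 := by
  simp only [schemeResidual, kappaDiff, hu]
  field_simp
  ring

theorem schemeResidual_of_cubic_eq_zero {a b c d h s : ℝ} (hh : h ≠ 0) {u : ℝ → ℝ}
    (hu : ∀ x, u x = a * x ^ 3 + b * x ^ 2 + c * x + d) (y : ℝ) :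
    schemeResidual ((1 - s / h) / 3) h s u y = 0 := by
  have hκ : 3 * ((1 - s / h) / 3) * h + s - h = 0 := by field_simp; ring
  rw [schemeResidual_of_cubic hh hu, hκ]
  ring

end KappaScheme

open KappaScheme in
theorem stmt7_general (a b c d V h τ : ℝ) (hh : 0 < h)
    (C κ : ℝ) (hC : C = τ * V / h) (hκ : κ = (1 - C) / 3)
    (u0 : ℝ → ℝ) (hu0 : ∀ x, u0 x = a * x ^ 3 + b * x ^ 2 + c * x + d)
    (U : ℤ → ℕ → ℝ) (hU : ∀ i n, U i n = u0 ((i : ℝ) * h - V * ((n : ℝ) * τ)))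
    (Dκ : ℤ → ℕ → ℝ)
    (hDκ : ∀ i n, Dκ i n =
      ((1 - κ) * (U i n - U (i - 1) n) + (1 + κ) * (U (i + 1) n - U i n)) / (2 * h)) :
    ∀ (i : ℤ) (n : ℕ),
      U i (n + 1) + τ * V * ((U i (n + 1) - U (i - 1) (n + 1)) / h - (1 / 2) * Dκ (i - 1) (n + 1)) =
        U i n - (1 / 2) * τ * V * Dκ i n := by
  intro i n
  have hres := schemeResidual_of_cubic_eq_zero hh.ne' hu0 (s := τ * V)
    ((i : ℝ) * h - V * ((n : ℝ) * τ))
  rw [← hC, ← hκ] at hres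
  simp only [schemeResidual, kappaDiff] at hres
  simp only [hDκ, hU]
  push_cast
  -- the nodes `(i + j) h - V (n + m) τ` and the points `y - m s + j h` agree after normalization
  ring_nf at hres ⊢
  linarith

/-- With κ = (1 − C)/3, C = τV/h, the semi-implicit κ-scheme reproduces exactly
every cubic exact solution u(x,t) = u⁰(x − Vt) (third-order accuracy). -/
theorem stmt7 (a b c d V h τ : ℝ) (hV : 0 < V) (hh : 0 < h) (hτ : 0 < τ)
    (C κ : ℝ) (hC : C = τ * V / h) (hκ : κ = (1 - C) / 3)
    (u0 : ℝ → ℝ) (hu0 : ∀ x, u0 x = a * x ^ 3 + b * x ^ 2 + c * x + d)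
    (U : ℤ → ℕ → ℝ) (hU : ∀ i n, U i n = u0 ((i : ℝ) * h - V * ((n : ℝ) * τ)))
    (Dκ : ℤ → ℕ → ℝ)
    (hDκ : ∀ i n, Dκ i n =
      ((1 - κ) * (U i n - U (i - 1) n) + (1 + κ) * (U (i + 1) n - U i n)) / (2 * h)) :
    ∀ (i : ℤ) (n : ℕ),
      U i (n + 1) + τ * V * ((U i (n + 1) - U (i - 1) (n + 1)) / h - (1 / 2) * Dκ (i - 1) (n + 1)) =
        U i n - (1 / 2) * τ * V * Dκ i n :=
  stmt7_general a b c d V h τ hh C κ hC hκ u0 hu0 U hU Dκ hDκ
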